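/- arXiv:2505.15274 — 3 statements merged into one kernel-verified Lean document; each statement's English description precedes it below -/
import Mathlib

section
/- Lower bounds for the probability of necessity PN(k,p,q). Let p ∈ {k+1,…,n} (so p ≠ j for all 1 ≤ j ≤ k) and q ∈ {1,…,n}. Then P(⋂_{j=1}^{k} {Y_j = j} ∩ {X = p} ∩ {Y = q}) ≥ max{ 0, Σ_{j=1}^{k} [ P(Y_j = j) + P(X = j) − P(X = j, Y = j) ] + P(X = p, Y = q) − k }. -/
/-!
Put `C j = {Y_j = j} ∪ {X = j}`, so that `P(C j) = P(Y_j = j) + P(X = j) - P(X = j, Y = j)`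
by consistency. Since `p ∉ {1, …, k}`, on `{X = p}` the event `C j` forces `Y_j = j`, so the
target event is `(⋂ j ≤ k, C j) ∩ {X = p, Y = q}`, and the bound is Bonferroni's inequality
`P(⋂ Eᵢ) ≥ ∑ P(Eᵢ) - (m - 1)` for these `k + 1` events.
-/

open MeasureTheory Finset

namespace MeasureTheory

variable {Ω : Type*} [MeasurableSpace Ω] {μ : Measure Ω} [IsProbabilityMeasure μ]

theorem measureReal_add_measureReal_sub_one_le_measureReal_inter {s t : Set Ω}
    (ht : MeasurableSet t) : μ.real s + μ.real t - 1 ≤ μ.real (s ∩ t) := by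
  linarith [measureReal_union_add_inter (μ := μ) (s := s) ht,
    measureReal_le_one (μ := μ) (s := s ∪ t)]

theorem sum_measureReal_sub_card_add_one_le_measureReal_biInter {ι : Type*} (s : Finset ι)
    {f : ι → Set Ω} (hf : ∀ i ∈ s, MeasurableSet (f i)) :
    ∑ i ∈ s, μ.real (f i) - #s + 1 ≤ μ.real (⋂ i ∈ s, f i) := by
  have hcompl : μ.real (⋂ i ∈ s, f i)ᶜ ≤ ∑ i ∈ s, (1 - μ.real (f i)) := by
    rw [Set.compl_iInter₂]
    refine (measureReal_biUnion_finset_le s _).trans (sum_le_sum fun i hi => ?_)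
    rw [probReal_compl_eq_one_sub (hf i hi)]
  rw [probReal_compl_eq_one_sub (s.measurableSet_biInter hf), sum_sub_distrib] at hcompl
  simp only [sum_const, nsmul_eq_mul, mul_one] at hcompl
  linarith

end MeasureTheory

section Counterfactual

variable {Ω α β : Type*} {X : Ω → α} {Y : α → Ω → β} {Yobs : Ω → β}

theorem setOf_treatment_and_observed_eq (hcons : ∀ ω, Yobs ω = Y (X ω) ω) (j : α) (i : β) :
    {ω | X ω = j ∧ Yobs ω = i} = {ω | X ω = j} ∩ {ω | Y j ω = i} := by
  ext ω
  simp only [Set.mem_ofPred_eq, Set.mem_inter_iff, hcons]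
  constructor <;> rintro ⟨rfl, h⟩ <;> exact ⟨rfl, h⟩

theorem biInter_union_treatment_inter_treatment_eq {s : Finset α} {p : α} (hp : p ∉ s)
    (A : α → Set Ω) :
    (⋂ j ∈ s, (A j ∪ {ω | X ω = j})) ∩ {ω | X ω = p} = (⋂ j ∈ s, A j) ∩ {ω | X ω = p} := by
  ext ω
  simp only [Set.mem_inter_iff, Set.mem_iInter, Set.mem_union, Set.mem_ofPred_eq]
  refine ⟨fun ⟨hC, hX⟩ => ⟨fun j hj => (hC j hj).resolve_right ?_, hX⟩,
    fun ⟨hA, hX⟩ => ⟨fun j hj => Or.inl (hA j hj), hX⟩⟩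
  rintro rfl
  exact hp (hX ▸ hj)

variable [MeasurableSpace Ω] [MeasurableSpace α] [MeasurableSingletonClass α]

theorem measureReal_union_treatment_eq (P : Measure Ω) [IsFiniteMeasure P] (hX : Measurable X)
    (hcons : ∀ ω, Yobs ω = Y (X ω) ω) (j : α) (i : β) :
    P.real ({ω | Y j ω = i} ∪ {ω | X ω = j})
      = P.real {ω | Y j ω = i} + P.real {ω | X ω = j} - P.real {ω | X ω = j ∧ Yobs ω = i} := by
  rw [setOf_treatment_and_observed_eq hcons, Set.inter_comm, eq_sub_iff_add_eq]
  exact measureReal_union_add_inter (hX (measurableSet_singleton j))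

variable [MeasurableSpace β] [MeasurableSingletonClass β]

theorem measurableSet_treatment_and_observed (hX : Measurable X) (hY : ∀ j, Measurable (Y j))
    (hcons : ∀ ω, Yobs ω = Y (X ω) ω) (j : α) (i : β) :
    MeasurableSet {ω | X ω = j ∧ Yobs ω = i} := by
  rw [setOf_treatment_and_observed_eq hcons]
  exact (hX (measurableSet_singleton j)).inter (hY j (measurableSet_singleton i))

end Counterfactual

theorem pn_kpq_lower_bounds_general
    {Ω : Type*} [MeasurableSpace Ω] (P : Measure Ω) [IsProbabilityMeasure P]
    (n k : ℕ)
    (X : Ω → ℕ) (Y : ℕ → Ω → ℕ) (Yobs : Ω → ℕ)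
    (hX : Measurable X) (hY : ∀ j, Measurable (Y j))
    (hcons : ∀ ω, Yobs ω = Y (X ω) ω)
    (p : ℕ) (hp : p ∈ Finset.Icc (k+1) n)
    (q : ℕ) :
    max 0
      ((∑ j ∈ Finset.Icc 1 k,
          ((P {ω | Y j ω = j}).toReal + (P {ω | X ω = j}).toReal - (P {ω | X ω = j ∧ Yobs ω = j}).toReal))
        + (P {ω | X ω = p ∧ Yobs ω = q}).toReal - (k : ℝ)) ≤ (P ((⋂ j ∈ Finset.Icc 1 k, {ω | Y j ω = j}) ∩ {ω | X ω = p} ∩ {ω | Yobs ω = q})).toReal := by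
  refine max_le ENNReal.toReal_nonneg ?_
  simp only [← measureReal_def]
  set C : ℕ → Set Ω := fun j => {ω | Y j ω = j} ∪ {ω | X ω = j}
  have hC : ∀ j, MeasurableSet (C j) := fun j =>
    (hY j (measurableSet_singleton j)).union (hX (measurableSet_singleton j))
  have hp_notMem : p ∉ Icc 1 k := fun h => by simp only [mem_Icc] at hp h; omega
  have htarget : (⋂ j ∈ Icc 1 k, C j) ∩ {ω | X ω = p ∧ Yobs ω = q}
      = (⋂ j ∈ Icc 1 k, {ω | Y j ω = j}) ∩ {ω | X ω = p} ∩ {ω | Yobs ω = q} := by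
    rw [Set.ofPred_and, ← Set.inter_assoc, biInter_union_treatment_inter_treatment_eq hp_notMem]
  have hbonf := sum_measureReal_sub_card_add_one_le_measureReal_biInter (μ := P) (Icc 1 k)
    (fun j _ => hC j)
  rw [Nat.card_Icc, Nat.add_sub_cancel] at hbonf
  calc ∑ j ∈ Icc 1 k, (P.real {ω | Y j ω = j} + P.real {ω | X ω = j}
          - P.real {ω | X ω = j ∧ Yobs ω = j}) + P.real {ω | X ω = p ∧ Yobs ω = q} - k
      = ∑ j ∈ Icc 1 k, P.real (C j) + P.real {ω | X ω = p ∧ Yobs ω = q} - k := by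
        simp only [C, measureReal_union_treatment_eq P hX hcons]
    _ ≤ P.real (⋂ j ∈ Icc 1 k, C j) + P.real {ω | X ω = p ∧ Yobs ω = q} - 1 := by linarith
    _ ≤ _ := by
        rw [← htarget]
        exact measureReal_add_measureReal_sub_one_le_measureReal_inter
          (measurableSet_treatment_and_observed hX hY hcons p q)

theorem pn_kpq_lower_bounds
    {Ω : Type*} [MeasurableSpace Ω] (P : Measure Ω) [IsProbabilityMeasure P]
    (n k : ℕ) (hk1 : 1 ≤ k) (hkn : k ≤ n)
    (X : Ω → ℕ) (Y : ℕ → Ω → ℕ) (Yobs : Ω → ℕ)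
    (hX : Measurable X) (hY : ∀ j, Measurable (Y j))
    (hXr : ∀ ω, X ω ∈ Finset.Icc 1 n)
    (hYr : ∀ j ω, Y j ω ∈ Finset.Icc 1 n)
    (hcons : ∀ ω, Yobs ω = Y (X ω) ω)
    (p : ℕ) (hp : p ∈ Finset.Icc (k+1) n)
    (q : ℕ) (hq : q ∈ Finset.Icc 1 n) :
    max 0
      ((∑ j ∈ Finset.Icc 1 k,
          ((P {ω | Y j ω = j}).toReal + (P {ω | X ω = j}).toReal - (P {ω | X ω = j ∧ Yobs ω = j}).toReal))
        + (P {ω | X ω = p ∧ Yobs ω = q}).toReal - (k : ℝ)) ≤ (P ((⋂ j ∈ Finset.Icc 1 k, {ω | Y j ω = j}) ∩ {ω | X ω = p} ∩ {ω | Yobs ω = q})).toReal :=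
  pn_kpq_lower_bounds_general P n k X Y Yobs hX hY hcons p hp q
end

section
/- Replaceability for the PSub(k,p) lower bounds: let p ∈ {k+1,…,n} and let v : {1,…,k} → {1,…,n} be an arbitrary assignment of target outcome values. Then P(⋂_{j=1}^{k} {Y_j = v(j)} ∩ {X = p}) ≥ max{ 0, Σ_{j=1}^{k} [ P(Y_j = v(j)) + P(X = j) − P(X = j, Y = v(j)) ] + P(X = p) − k }. -/
/-!
Under consistency, `{X = j, Y = v j}` is `{Y_j = v j} ∩ {X = j}`, so by inclusion–exclusion each
summand `P(Y_j = v j) + P(X = j) - P(X = j, Y = v j)` is the probability of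
`S_j = {Y_j = v j} ∪ {X = j}`. Since `p ∉ {1, …, k}`, on `{X = p}` the event `S_j` reduces to
`{Y_j = v j}`, so the target event is `(⋂ⱼ S_j) ∩ {X = p}`, and the bound is the Bonferroni
inequality `P(E₁ ∩ ⋯ ∩ Eₘ) ≥ ∑ᵢ P(Eᵢ) - (m - 1)` for these `k + 1` events.
-/

open MeasureTheory

section Bonferroni

variable {Ω : Type*} [MeasurableSpace Ω] {μ : Measure Ω} [IsProbabilityMeasure μ]

lemma measureReal_add_measureReal_sub_one_le_inter {s t : Set Ω} (ht : MeasurableSet t) :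
    μ.real s + μ.real t - 1 ≤ μ.real (s ∩ t) := by
  have := measureReal_union_add_inter (μ := μ) (s := s) ht
  linarith [measureReal_le_one (μ := μ) (s := s ∪ t)]

lemma sum_measureReal_sub_card_le_measureReal_biInter {ι : Type*} [DecidableEq ι]
    (s : Finset ι) {E : ι → Set Ω} (hE : ∀ i ∈ s, MeasurableSet (E i)) :
    ∑ i ∈ s, μ.real (E i) - (s.card - 1 : ℝ) ≤ μ.real (⋂ i ∈ s, E i) := by
  induction s using Finset.induction_on with
  | empty => simp
  | insert a s ha ih =>
    have hrest := ih fun i hi ↦ hE i (Finset.mem_insert_of_mem hi)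
    have hpair := measureReal_add_measureReal_sub_one_le_inter (μ := μ)
      (s := ⋂ i ∈ s, E i) (hE a (Finset.mem_insert_self a s))
    rw [Finset.sum_insert ha, Finset.card_insert_of_notMem ha, Finset.set_biInter_insert,
      Set.inter_comm]
    push_cast
    linarith

end Bonferroni

lemma biInter_union_setOf_eq_inter_setOf_eq {Ω ι : Type*} (s : Finset ι) (A : ι → Set Ω)
    (f : Ω → ι) {p : ι} (hp : p ∉ s) :
    (⋂ j ∈ s, (A j ∪ {ω | f ω = j})) ∩ {ω | f ω = p} = (⋂ j ∈ s, A j) ∩ {ω | f ω = p} := by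
  ext ω
  simp only [Set.mem_inter_iff, Set.mem_iInter, Set.mem_union, Set.mem_ofPred_eq]
  constructor
  · rintro ⟨hA, rfl⟩
    refine ⟨fun j hj ↦ (hA j hj).resolve_right ?_, rfl⟩
    rintro rfl
    exact hp hj
  · rintro ⟨hA, hfp⟩
    exact ⟨fun j hj ↦ Or.inl (hA j hj), hfp⟩

lemma setOf_eq_and_apply_eq_eq_inter {Ω ι α : Type*} (X : Ω → ι) (Y : ι → Ω → α) (j : ι)
    (c : α) : {ω | X ω = j ∧ Y (X ω) ω = c} = {ω | Y j ω = c} ∩ {ω | X ω = j} := by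
  ext ω
  constructor
  · rintro ⟨rfl, h⟩
    exact ⟨h, rfl⟩
  · rintro ⟨h, rfl⟩
    exact ⟨rfl, h⟩

theorem psub_kp_lower_bounds_replaceability_general
    {Ω : Type*} [MeasurableSpace Ω] (P : Measure Ω) [IsProbabilityMeasure P]
    (n k : ℕ)
    (X : Ω → ℕ) (Y : ℕ → Ω → ℕ) (Yobs : Ω → ℕ)
    (hX : Measurable X) (hY : ∀ j, Measurable (Y j))
    (hcons : ∀ ω, Yobs ω = Y (X ω) ω)
    (p : ℕ) (hp : p ∈ Finset.Icc (k+1) n)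
    (v : ℕ → ℕ) :
    max 0
      ((∑ j ∈ Finset.Icc 1 k,
          ((P {ω | Y j ω = v j}).toReal + (P {ω | X ω = j}).toReal - (P {ω | X ω = j ∧ Yobs ω = v j}).toReal))
        + (P {ω | X ω = p}).toReal - (k : ℝ)) ≤ (P ((⋂ j ∈ Finset.Icc 1 k, {ω | Y j ω = v j}) ∩ {ω | X ω = p})).toReal := by
  simp only [← measureReal_def, hcons]
  have hXm (j : ℕ) : MeasurableSet {ω | X ω = j} := hX (measurableSet_singleton j)
  have hYm (j : ℕ) : MeasurableSet {ω | Y j ω = v j} := hY j (measurableSet_singleton _)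
  have hunion (j : ℕ) : P.real {ω | Y j ω = v j} + P.real {ω | X ω = j}
      - P.real {ω | X ω = j ∧ Y (X ω) ω = v j} = P.real ({ω | Y j ω = v j} ∪ {ω | X ω = j}) := by
    rw [setOf_eq_and_apply_eq_eq_inter]
    linarith [measureReal_union_add_inter (μ := P) (s := {ω | Y j ω = v j}) (hXm j)]
  have hpk : p ∉ Finset.Icc 1 k := by simp only [Finset.mem_Icc] at hp ⊢; omega
  rw [Finset.sum_congr rfl fun j _ ↦ hunion j,
    ← biInter_union_setOf_eq_inter_setOf_eq _ _ X hpk]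
  refine max_le measureReal_nonneg ?_
  have hinter := sum_measureReal_sub_card_le_measureReal_biInter (μ := P) (Finset.Icc 1 k)
    (E := fun j ↦ {ω | Y j ω = v j} ∪ {ω | X ω = j}) fun j _ ↦ (hYm j).union (hXm j)
  have hpair := measureReal_add_measureReal_sub_one_le_inter (μ := P)
    (s := ⋂ j ∈ Finset.Icc 1 k, ({ω | Y j ω = v j} ∪ {ω | X ω = j})) (hXm p)
  simp only [Nat.card_Icc, add_tsub_cancel_right] at hinter
  linarith

theorem psub_kp_lower_bounds_replaceability
    {Ω : Type*} [MeasurableSpace Ω] (P : Measure Ω) [IsProbabilityMeasure P]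
    (n k : ℕ) (hk1 : 1 ≤ k) (hkn : k ≤ n)
    (X : Ω → ℕ) (Y : ℕ → Ω → ℕ) (Yobs : Ω → ℕ)
    (hX : Measurable X) (hY : ∀ j, Measurable (Y j))
    (hXr : ∀ ω, X ω ∈ Finset.Icc 1 n)
    (hYr : ∀ j ω, Y j ω ∈ Finset.Icc 1 n)
    (hcons : ∀ ω, Yobs ω = Y (X ω) ω)
    (p : ℕ) (hp : p ∈ Finset.Icc (k+1) n)
    (v : ℕ → ℕ) (hv : ∀ j ∈ Finset.Icc 1 k, v j ∈ Finset.Icc 1 n) :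
    max 0
      ((∑ j ∈ Finset.Icc 1 k,
          ((P {ω | Y j ω = v j}).toReal + (P {ω | X ω = j}).toReal - (P {ω | X ω = j ∧ Yobs ω = v j}).toReal))
        + (P {ω | X ω = p}).toReal - (k : ℝ)) ≤ (P ((⋂ j ∈ Finset.Icc 1 k, {ω | Y j ω = v j}) ∩ {ω | X ω = p})).toReal :=
  psub_kp_lower_bounds_replaceability_general P n k X Y Yobs hX hY hcons p hp v
end

section
/- Equivalence classes of probabilities of causation, Case 2 (padding the treatment variable): fix integers 1 ≤ k ≤ m < n and data arrays e, o : {1,…,m} × {1,…,m} → ℝ. Let S_m be the set of real numbers of the form P(⋂_{j=1}^{k} {Y_j = j}) where the counterfactual model ranges over all probability spaces (Ω, 𝒜, P) with a measurable treatment X' : Ω → {1,…,m} and measurable potential outcomes Y_j : Ω → {1,…,m} (j ∈ {1,…,m}), observed outcome Y(ω) = Y_{X'(ω)}(ω), satisfying P(Y_j = i) = e(j,i) and P(X' = j, Y = i) = o(j,i) for all j, i ∈ {1,…,m}. Let S_n be the analogously defined set for models with treatment X : Ω → {1,…,n} and potential outcomes Y_l : Ω → {1,…,m} for l ∈ {1,…,n},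 subject to the additional constraints that for every l ∈ {m+1,…,n}: P(X = l) = 0, P(Y_l = j) = 0 for all j ∈ {1,…,m−1}, and P(Y_l = m) = 1, together with P(Y_j = i) = e(j,i) and P(X = j, Y = i) = o(j,i) for all j, i ∈ {1,…,m}. Then S_n = S_m; consequently the tight bounds on P(⋂_{j=1}^{k} {Y_j = j}) computed from the padded data coincide with those computed from the original data. -/
/-!
Both sets describe the same models up to a null modification. A padded model becomes an
ordinary one by sending the treatments `m+1, …, n`, which occur with probability zero, to
treatment `1`; this changes `X` only on a null set, so no observational probability moves.
Conversely an ordinary model is padded by declaring the potential outcomes of the unused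
treatments `l > m` to be constantly `m`. Neither change touches `Y 1, …, Y k`.
-/

open MeasureTheory

variable {Ω : Type*}

def clampTreatment (m : ℕ) (X : Ω → ℕ) : Ω → ℕ :=
  fun ω => if X ω ≤ m then X ω else 1

def padOutcomes (m : ℕ) (Y : ℕ → Ω → ℕ) : ℕ → Ω → ℕ :=
  fun l => if l ≤ m then Y l else fun _ => m

section clampTreatment

variable {m : ℕ} {X : Ω → ℕ}

lemma clampTreatment_mem_Icc (hm : 1 ≤ m) {ω : Ω} (hX : 1 ≤ X ω) :
    clampTreatment m X ω ∈ Finset.Icc 1 m := by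
  unfold clampTreatment
  split_ifs <;> simp only [Finset.mem_Icc] <;> omega

variable [MeasurableSpace Ω]

lemma Measurable.clampTreatment (hX : Measurable X) : Measurable (clampTreatment m X) :=
  Measurable.ite (measurableSet_le hX measurable_const) hX measurable_const

lemma ae_le_of_measure_eq_zero {P : Measure Ω} {n : ℕ} (hX : ∀ ω, X ω ≤ n)
    (hnull : ∀ l ∈ Finset.Icc (m + 1) n, P {ω | X ω = l} = 0) : ∀ᵐ ω ∂P, X ω ≤ m := by
  have hne : ∀ᵐ ω ∂P, ∀ l ∈ Finset.Icc (m + 1) n, X ω ≠ l :=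
    (Filter.eventually_all_finset _).2 fun l hl => ae_iff.2 (by simpa using hnull l hl)
  filter_upwards [hne] with ω hω
  by_contra hlt
  exact hω (X ω) (Finset.mem_Icc.2 ⟨by omega, hX ω⟩) rfl

lemma clampTreatment_ae_eq {P : Measure Ω} (hX : ∀ᵐ ω ∂P, X ω ≤ m) :
    clampTreatment m X =ᵐ[P] X :=
  hX.mono fun _ h => if_pos h

end clampTreatment

lemma measure_setOf_congr_ae {α : Type*} [MeasurableSpace Ω] {P : Measure Ω} {X X' : Ω → α}
    (h : X =ᵐ[P] X') (p : α → Ω → Prop) :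
    P {ω | p (X ω) ω} = P {ω | p (X' ω) ω} :=
  measure_congr <| Filter.Eventually.set_eq <| h.mono fun ω hω => by
    simp only [Set.mem_ofPred_eq, hω]

section padOutcomes

variable {m : ℕ} {Y : ℕ → Ω → ℕ}

@[simp]
lemma padOutcomes_of_le {l : ℕ} (h : l ≤ m) : padOutcomes m Y l = Y l := if_pos h

@[simp]
lemma padOutcomes_of_lt {l : ℕ} (h : m < l) : padOutcomes m Y l = fun _ => m :=
  if_neg (Nat.not_le.2 h)

lemma padOutcomes_mem_Icc (hm : 1 ≤ m) (hY : ∀ j ω, Y j ω ∈ Finset.Icc 1 m) (l : ℕ) (ω : Ω) :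
    padOutcomes m Y l ω ∈ Finset.Icc 1 m := by
  rcases le_or_gt l m with h | h
  · simpa [h] using hY l ω
  · simpa [h]

lemma measurable_padOutcomes [MeasurableSpace Ω] (hY : ∀ j, Measurable (Y j)) (l : ℕ) :
    Measurable (padOutcomes m Y l) := by
  rcases le_or_gt l m with h | h
  · simpa [h] using hY l
  · simp [h]

end padOutcomes

theorem equivalence_class_treatment_padding
    (n m k : ℕ) (hk1 : 1 ≤ k) (hkm : k ≤ m) (hmn : m < n)
    (e o : ℕ → ℕ → ℝ) :
    {r : ℝ | ∃ (Ω : Type) (_ : MeasurableSpace Ω) (P : Measure Ω)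
        (_ : IsProbabilityMeasure P) (X : Ω → ℕ) (Y : ℕ → Ω → ℕ),
      Measurable X ∧ (∀ j, Measurable (Y j)) ∧
      (∀ ω, X ω ∈ Finset.Icc 1 n) ∧
      (∀ j ω, Y j ω ∈ Finset.Icc 1 m) ∧
      (∀ l ∈ Finset.Icc (m+1) n, (P {ω | X ω = l}).toReal = 0) ∧
      (∀ l ∈ Finset.Icc (m+1) n, ∀ j ∈ Finset.Icc 1 (m-1),
        (P {ω | Y l ω = j}).toReal = 0) ∧
      (∀ l ∈ Finset.Icc (m+1) n, (P {ω | Y l ω = m}).toReal = 1) ∧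
      (∀ j ∈ Finset.Icc 1 m, ∀ i ∈ Finset.Icc 1 m,
        (P {ω | Y j ω = i}).toReal = e j i) ∧
      (∀ j ∈ Finset.Icc 1 m, ∀ i ∈ Finset.Icc 1 m,
        (P {ω | X ω = j ∧ Y (X ω) ω = i}).toReal = o j i) ∧
      r = (P (⋂ j ∈ Finset.Icc 1 k, {ω | Y j ω = j})).toReal} =
    {r : ℝ | ∃ (Ω : Type) (_ : MeasurableSpace Ω) (P : Measure Ω)
        (_ : IsProbabilityMeasure P) (X : Ω → ℕ) (Y : ℕ → Ω → ℕ),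
      Measurable X ∧ (∀ j, Measurable (Y j)) ∧
      (∀ ω, X ω ∈ Finset.Icc 1 m) ∧
      (∀ j ω, Y j ω ∈ Finset.Icc 1 m) ∧
      (∀ j ∈ Finset.Icc 1 m, ∀ i ∈ Finset.Icc 1 m,
        (P {ω | Y j ω = i}).toReal = e j i) ∧
      (∀ j ∈ Finset.Icc 1 m, ∀ i ∈ Finset.Icc 1 m,
        (P {ω | X ω = j ∧ Y (X ω) ω = i}).toReal = o j i) ∧
      r = (P (⋂ j ∈ Finset.Icc 1 k, {ω | Y j ω = j})).toReal} := by
  have hm : 1 ≤ m := hk1.trans hkm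
  ext r
  constructor
  · rintro ⟨Ω, mΩ, P, hP, X, Y, hX, hY, hXr, hYr, hXnull, -, -, he, ho, rfl⟩
    have hXm : clampTreatment m X =ᵐ[P] X := clampTreatment_ae_eq <|
      ae_le_of_measure_eq_zero (fun ω => (Finset.mem_Icc.1 (hXr ω)).2)
        fun l hl => (measureReal_eq_zero_iff).1 (hXnull l hl)
    refine ⟨Ω, mΩ, P, hP, clampTreatment m X, Y, hX.clampTreatment, hY,
      fun ω => clampTreatment_mem_Icc hm (Finset.mem_Icc.1 (hXr ω)).1, hYr, he, ?_, rfl⟩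
    intro j hj i hi
    rw [← ho j hj i hi, measure_setOf_congr_ae hXm fun x ω => x = j ∧ Y x ω = i]
  · rintro ⟨Ω, mΩ, P, hP, X, Y, hX, hY, hXr, hYr, he, ho, rfl⟩
    have hXm (ω : Ω) : X ω ≤ m := (Finset.mem_Icc.1 (hXr ω)).2
    refine ⟨Ω, mΩ, P, hP, X, padOutcomes m Y, hX, measurable_padOutcomes hY,
      fun ω => Finset.Icc_subset_Icc_right hmn.le (hXr ω), padOutcomes_mem_Icc hm hYr,
      fun l hl => ?_, fun l hl j hj => ?_, fun l hl => ?_, fun j hj i hi => ?_,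
      fun j hj i hi => ?_, ?_⟩
    · have hXl (ω : Ω) : X ω ≠ l := ((hXm ω).trans_lt (Finset.mem_Icc.1 hl).1).ne
      simp [hXl]
    · have hjm : m ≠ j := by simp only [Finset.mem_Icc] at hj; omega
      simp [padOutcomes_of_lt (Finset.mem_Icc.1 hl).1, hjm]
    · simp [padOutcomes_of_lt (Finset.mem_Icc.1 hl).1]
    · simpa [padOutcomes_of_le (Finset.mem_Icc.1 hj).2] using he j hj i hi
    · simpa [hXm] using ho j hj i hi
    · congr 2
      exact Set.iInter₂_congr fun j hj => by
        rw [padOutcomes_of_le ((Finset.mem_Icc.1 hj).2.trans hkm)]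
end
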